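/- arXiv:1709.04136 — 2 statements merged into one kernel-verified Lean document; each statement's English description precedes it below -/
import Mathlib

section
/- For a finite nonempty index set I, C : I -> R, and Phi(eta) = -(1/eta) * ln( sum_{i in I} exp(-eta * C(i)) ) for eta > 0, we have for 0 < eta_2 <= eta_1 that Phi(eta_1) - Phi(eta_2) <= (ln |I|)*(1/eta_2 - 1/eta_1). -/
/-- monotonicity/penalty for the soft-min across temperatures:
for `0 < η₂ ≤ η₁`, `Φ(η₁) - Φ(η₂) ≤ (ln |I|) * (1/η₂ - 1/η₁)` where
`Φ(η) = -(1/η) ln ∑ exp(-η C i)`. -/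
theorem stmt_5 {I : Type*} [Fintype I] [Nonempty I] (C : I → ℝ)
    (η₁ η₂ : ℝ) (hη₂ : 0 < η₂) (hle : η₂ ≤ η₁)
    (Φ : ℝ → ℝ) (hΦ : ∀ e : ℝ, Φ e = -(1 / e) * Real.log (∑ i, Real.exp (-e * C i))) :
    Φ η₁ - Φ η₂ ≤ Real.log (Fintype.card I) * (1 / η₂ - 1 / η₁) := by
  have hη₁ : 0 < η₁ := lt_of_lt_of_le hη₂ hle
  set N : ℝ := (Fintype.card I : ℝ) with hN
  have hNpos : 0 < N := by
    exact_mod_cast Nat.cast_pos.mpr (Fintype.card_pos (α := I))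
  set S₁ : ℝ := ∑ i, Real.exp (-η₁ * C i) with hS₁
  set S₂ : ℝ := ∑ i, Real.exp (-η₂ * C i) with hS₂
  have hS₁pos : 0 < S₁ := Finset.sum_pos (fun i _ => Real.exp_pos _) Finset.univ_nonempty
  have hS₂pos : 0 < S₂ := Finset.sum_pos (fun i _ => Real.exp_pos _) Finset.univ_nonempty
  set p : ℝ := η₁ / η₂ with hp
  have hp1 : 1 ≤ p := (one_le_div hη₂).mpr hle
  -- Jensen with weights 1/N
  have jensen : ((1 / N) * S₂) ^ p ≤ (1 / N) * S₁ := by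
    have h := Real.rpow_arith_mean_le_arith_mean_rpow Finset.univ
      (fun _ : I => 1 / N) (fun i => Real.exp (-η₂ * C i))
      (fun i _ => by positivity)
      (by simp [Finset.sum_const, hN])
      (fun i _ => (Real.exp_pos _).le) hp1
    calc ((1 / N) * S₂) ^ p = (∑ i, (1 / N) * Real.exp (-η₂ * C i)) ^ p := by
          rw [← Finset.mul_sum]
      _ ≤ ∑ i, (1 / N) * Real.exp (-η₂ * C i) ^ p := h
      _ = (1 / N) * S₁ := by
          rw [← Finset.mul_sum]
          congr 1
          apply Finset.sum_congr rfl
          intro i _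
          rw [← Real.exp_log (Real.exp_pos (-η₂ * C i)), ← Real.exp_mul,
            Real.log_exp]
          congr 1
          field_simp [hp]
          rw [hp]; field_simp
  -- take logs
  have hlog : p * (Real.log S₂ - Real.log N) ≤ Real.log S₁ - Real.log N := by
    have h1 : Real.log (((1 / N) * S₂) ^ p) ≤ Real.log ((1 / N) * S₁) :=
      Real.log_le_log (by positivity) jensen
    rw [Real.log_rpow (by positivity), Real.log_mul (by positivity) hS₂pos.ne',
      Real.log_mul (by positivity) hS₁pos.ne', Real.log_div one_ne_zero hNpos.ne',
      Real.log_one] at h1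
    linarith
  rw [hΦ η₁, hΦ η₂]
  rw [hp] at hlog
  rw [div_mul_eq_mul_div, div_le_iff₀ hη₂] at hlog
  have goal' : η₁ * ((1 / η₂) * Real.log S₂ - Real.log N / η₂)
      ≤ η₁ * ((1 / η₁) * Real.log S₁ - Real.log N / η₁) := by
    have e1 : η₁ * ((1 / η₂) * Real.log S₂ - Real.log N / η₂)
        = (η₁ * (Real.log S₂ - Real.log N)) / η₂ := by field_simp
    have e2 : η₁ * ((1 / η₁) * Real.log S₁ - Real.log N / η₁)
        = Real.log S₁ - Real.log N := by field_simp
    rw [e1, e2, div_le_iff₀ hη₂]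
    nlinarith [hlog]
  have := (mul_le_mul_iff_right₀ hη₁).mp goal'
  rw [← hS₁, ← hS₂]
  ring_nf at this ⊢
  linarith [this]
end

section
/- Exponential weighting regret with time-varying learning rate: Let I be a finite nonempty set and let c_t : I -> [0,1] for t = 1,...,T. Let eta_t = 1/sqrt(t), let C_t(i) = sum_{s<=t} c_s(i), and let the algorithm play distribution p_t(i) proportional to exp(-eta_t * C_{t-1}(i)). Then sum_{t=1}^T sum_i p_t(i) c_t(i) - min_{i in I} sum_{t=1}^T c_t(i) <= (ln|I|)/eta_T + (ln|I|)*sum_{t=2}^T (1/eta_t - 1/eta_{t-1}) + sum_{t=1}^T eta_t/8, which is at most 2*(ln|I|)*sqrt(T) + sqrt(T)/4 + ln|I|. -/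
/-!
The normalised soft-min `softMin η v = -(1/η) log (mean_i exp (-η v i))` is a potential for
the exponential-weights forecaster. By Hoeffding's lemma, the expected cost of one round is at
most the increase of the potential plus `η/8`; by the power-mean inequality the potential does
not decrease when `η` shrinks; it vanishes at `C_0 = 0`, and it is at most
`min_i C_T(i) + log |I| / η_T`. Telescoping gives regret `≤ log |I| / η_T + ∑_t η_t / 8`. The
correction terms `(1/η_t - 1/η_{t-1}) log |I|` of the unnormalised potential are nonnegative, so
they only weaken this bound. For `η_t = 1/√t`, use `1/√t ≤ 2 (√t - √(t-1))` and telescope.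
-/

open Real Finset ProbabilityTheory MeasureTheory

theorem Finset.sum_Icc_sub_pred {M : Type*} [AddCommGroup M] (f : ℕ → M) {m n : ℕ}
    (hmn : m ≤ n) : ∑ t ∈ Icc (m + 1) n, (f t - f (t - 1)) = f n - f m := by
  induction n, hmn using Nat.le_induction with
  | base => simp
  | succ n hmn ih => rw [sum_Icc_succ_top (by omega), ih, Nat.add_sub_cancel]; abel

theorem one_div_sqrt_le_two_mul_sub_sqrt {t : ℕ} (ht : 1 ≤ t) :
    1 / √t ≤ 2 * (√t - √(t - 1 : ℕ)) := by
  have hpos : 0 < √t := sqrt_pos.2 (by exact_mod_cast ht)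
  have hsq : √t ^ 2 = √(t - 1 : ℕ) ^ 2 + 1 := by
    rw [sq_sqrt (by positivity), sq_sqrt (by positivity), Nat.cast_sub ht]; ring
  rw [div_le_iff₀ hpos]
  nlinarith [sq_nonneg (√t - √(t - 1 : ℕ)), sqrt_nonneg (t - 1 : ℕ)]

theorem sum_Icc_one_div_sqrt_le (n : ℕ) : ∑ t ∈ Icc 1 n, 1 / √t ≤ 2 * √n := by
  calc ∑ t ∈ Icc 1 n, 1 / √t ≤ ∑ t ∈ Icc 1 n, 2 * (√t - √(t - 1 : ℕ)) :=
        sum_le_sum fun t ht => one_div_sqrt_le_two_mul_sub_sqrt (mem_Icc.1 ht).1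
    _ = 2 * √n := by
        rw [← mul_sum, sum_Icc_sub_pred (fun t : ℕ => √t) n.zero_le]; simp

theorem sum_mul_exp_le_of_mem_Icc {ι : Type*} [Fintype ι] {p c : ι → ℝ}
    (hp : ∀ i, 0 ≤ p i) (hp1 : ∑ i, p i = 1) (hc : ∀ i, c i ∈ Set.Icc (0 : ℝ) 1) (s : ℝ) :
    ∑ i, p i * exp (s * c i) ≤ exp (s * ∑ i, p i * c i + s ^ 2 / 8) := by
  let _ : MeasurableSpace ι := ⊤
  let P : PMF ι := PMF.ofFintype (fun i => ENNReal.ofReal (p i)) <| by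
    rw [← ENNReal.ofReal_sum_of_nonneg fun i _ => hp i, hp1, ENNReal.ofReal_one]
  have hP : ∀ f : ι → ℝ, ∫ i, f i ∂P.toMeasure = ∑ i, p i * f i := fun f => by
    simp [PMF.integral_eq_sum, P, PMF.ofFintype_apply, ENNReal.toReal_ofReal (hp _)]
  have h := (hasSubgaussianMGF_of_mem_Icc (μ := P.toMeasure) (X := c)
    (measurable_of_finite c).aemeasurable (ae_of_all _ hc)).mgf_le s
  simp only [mgf, hP] at h
  set m := ∑ i, p i * c i
  have hσ : (((‖(1 : ℝ) - 0‖₊ / 2) ^ 2 : NNReal) : ℝ) * s ^ 2 / 2 = s ^ 2 / 8 := by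
    norm_num; ring
  calc ∑ i, p i * exp (s * c i) = exp (s * m) * ∑ i, p i * exp (s * (c i - m)) := by
        rw [mul_sum]; congr! 1 with i; rw [mul_left_comm, ← exp_add]; ring_nf
    _ ≤ exp (s * m) * exp (s ^ 2 / 8) := by rw [← hσ]; gcongr
    _ = exp (s * m + s ^ 2 / 8) := (exp_add _ _).symm

section ExpWeights

variable {ι : Type*} [Fintype ι]

/-- Normalised by `|ι|`, so that it vanishes at `v = 0` and is antitone in `η`; the paper's
potential `-(1/η) ln ∑ exp (-η v i)` is `softMin η v - log |ι| / η`. -/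
noncomputable def softMin (η : ℝ) (v : ι → ℝ) : ℝ :=
  -η⁻¹ * log ((∑ i, exp (-η * v i)) / Fintype.card ι)

noncomputable def expWeights (η : ℝ) (v : ι → ℝ) (i : ι) : ℝ :=
  exp (-η * v i) / ∑ j, exp (-η * v j)

theorem expWeights_pos (η : ℝ) (v : ι → ℝ) (i : ι) : 0 < expWeights η v i :=
  div_pos (exp_pos _) (sum_pos (fun _ _ => exp_pos _) ⟨i, mem_univ i⟩)

theorem sum_expWeights [Nonempty ι] (η : ℝ) (v : ι → ℝ) : ∑ i, expWeights η v i = 1 := by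
  simp only [expWeights]
  rw [← sum_div, div_self (sum_pos (fun i _ => exp_pos _) univ_nonempty).ne']

theorem softMin_zero [Nonempty ι] (η : ℝ) : softMin η (0 : ι → ℝ) = 0 := by
  simp [softMin, Fintype.card_ne_zero]

theorem softMin_le {η : ℝ} (hη : 0 < η) (v : ι → ℝ) (i : ι) :
    softMin η v ≤ v i + log (Fintype.card ι) / η := by
  have : Nonempty ι := ⟨i⟩
  have hn : (0 : ℝ) < Fintype.card ι := by exact_mod_cast Fintype.card_pos
  have hi : exp (-η * v i) / Fintype.card ι ≤ (∑ j, exp (-η * v j)) / Fintype.card ι := by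
    gcongr
    exact single_le_sum (f := fun j => exp (-η * v j)) (fun j _ => (exp_pos _).le) (mem_univ i)
  have hlog := log_le_log (by positivity) hi
  rw [log_div (exp_pos _).ne' hn.ne', log_exp] at hlog
  rw [softMin, neg_mul, neg_le, ← sub_nonneg]
  have : -(v i + log (Fintype.card ι) / η) = η⁻¹ * (-η * v i - log (Fintype.card ι)) := by
    field_simp; ring
  rw [this, ← mul_sub]
  exact mul_nonneg (inv_nonneg.2 hη.le) (sub_nonneg.2 hlog)

theorem softMin_antitone [Nonempty ι] (v : ι → ℝ) {a b : ℝ} (ha : 0 < a) (hab : a ≤ b) :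
    softMin b v ≤ softMin a v := by
  have hb : 0 < b := ha.trans_le hab
  have hn : (0 : ℝ) < Fintype.card ι := by exact_mod_cast Fintype.card_pos
  have hmean : ∀ x : ℝ, (∑ i, exp (-x * v i)) / Fintype.card ι =
      ∑ i, (Fintype.card ι : ℝ)⁻¹ * exp (-x * v i) := fun x => by
    rw [← mul_sum, div_eq_inv_mul]
  have hpow : ∀ i, exp (-a * v i) ^ (b / a) = exp (-b * v i) := fun i => by
    rw [← exp_mul]; field_simp
  -- Jensen for `z ↦ z ^ (b / a)`: the power mean of `exp (-v)` is monotone in its order.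
  have jensen := rpow_arith_mean_le_arith_mean_rpow univ (fun _ => (Fintype.card ι : ℝ)⁻¹)
    (fun i => exp (-a * v i)) (fun _ _ => by positivity)
    (by simp [Finset.card_univ, hn.ne']) (fun _ _ => (exp_pos _).le) ((one_le_div ha).2 hab)
  simp only [hpow, ← hmean] at jensen
  have hlog := log_le_log (by positivity) jensen
  rw [log_rpow (by positivity)] at hlog
  calc softMin b v ≤ -b⁻¹ * (b / a * log ((∑ i, exp (-a * v i)) / Fintype.card ι)) := by
        rw [softMin, neg_mul, neg_mul, neg_le_neg_iff]; gcongr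
    _ = softMin a v := by rw [softMin]; field_simp

theorem sum_expWeights_mul_le [Nonempty ι] {η : ℝ} (hη : 0 < η) (v c : ι → ℝ)
    (hc : ∀ i, c i ∈ Set.Icc (0 : ℝ) 1) :
    ∑ i, expWeights η v i * c i ≤ softMin η (v + c) - softMin η v + η / 8 := by
  set m := ∑ i, expWeights η v i * c i
  set S := ∑ i, exp (-η * v i)
  have hS : 0 < S := sum_pos (fun i _ => exp_pos _) univ_nonempty
  have hn : (0 : ℝ) < Fintype.card ι := by exact_mod_cast Fintype.card_pos
  have hsplit : ∑ i, exp (-η * (v + c) i) = S * ∑ i, expWeights η v i * exp (-η * c i) := by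
    rw [mul_sum]; congr! 1 with i
    rw [expWeights, Pi.add_apply, mul_add, exp_add, div_mul_eq_mul_div, mul_div_cancel₀ _ hS.ne']
  have hoeffding := sum_mul_exp_le_of_mem_Icc (fun i => (expWeights_pos η v i).le)
    (sum_expWeights η v) hc (-η)
  rw [neg_sq] at hoeffding
  have hlog : log ((∑ i, exp (-η * (v + c) i)) / Fintype.card ι) ≤
      log (S / Fintype.card ι) + (-η * m + η ^ 2 / 8) := by
    have hw : 0 < ∑ i, expWeights η v i * exp (-η * c i) :=
      sum_pos (fun i _ => mul_pos (expWeights_pos η v i) (exp_pos _)) univ_nonempty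
    rw [hsplit, mul_div_right_comm, log_mul (by positivity) hw.ne']
    gcongr
    exact (log_le_log hw hoeffding).trans_eq (log_exp _)
  have hscale : η⁻¹ * (-η * m + η ^ 2 / 8) = -m + η / 8 := by field_simp
  have := mul_le_mul_of_nonneg_left hlog (inv_nonneg.2 hη.le)
  rw [mul_add, hscale] at this
  rw [softMin, softMin]
  linarith

theorem sum_expWeights_mul_le_add_log_card [Nonempty ι] {T : ℕ} (hT : 1 ≤ T)
    (c : ℕ → ι → ℝ) (hc : ∀ t i, c t i ∈ Set.Icc (0 : ℝ) 1)
    (η : ℕ → ℝ) (hη_pos : ∀ t, 1 ≤ t → 0 < η t) (hη_anti : ∀ t, 2 ≤ t → η t ≤ η (t - 1))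
    (C : ℕ → ι → ℝ) (hC : ∀ t i, C t i = ∑ s ∈ Icc 1 t, c s i) (i : ι) :
    ∑ t ∈ Icc 1 T, ∑ j, expWeights (η t) (C (t - 1)) j * c t j ≤
      C T i + log (Fintype.card ι) / η T + ∑ t ∈ Icc 1 T, η t / 8 := by
  have hC0 : C 0 = 0 := funext fun i => by simp [hC]
  have hC_succ : ∀ t, 1 ≤ t → C (t - 1) + c t = C t := fun t ht => funext fun i => by
    obtain ⟨s, rfl⟩ := Nat.exists_eq_add_of_le' ht
    simp [hC, sum_Icc_succ_top]
  set Φ : ℕ → ℝ := fun t => softMin (η t) (C t)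
  have hΦ0 : Φ 0 = 0 := by simp [Φ, hC0, softMin_zero]
  have step : ∀ t ∈ Icc 1 T,
      ∑ j, expWeights (η t) (C (t - 1)) j * c t j ≤ Φ t - Φ (t - 1) + η t / 8 := by
    intro t ht
    have ht : 1 ≤ t := (mem_Icc.1 ht).1
    have h := sum_expWeights_mul_le (hη_pos t ht) (C (t - 1)) (c t) (hc t)
    rw [hC_succ t ht] at h
    have hΦ : Φ (t - 1) ≤ softMin (η t) (C (t - 1)) := by
      rcases ht.eq_or_lt with rfl | ht
      · simp [Φ, hC0, softMin_zero]
      · exact softMin_antitone _ (hη_pos t ht.le) (hη_anti t ht)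
    linarith
  calc ∑ t ∈ Icc 1 T, ∑ j, expWeights (η t) (C (t - 1)) j * c t j
      ≤ ∑ t ∈ Icc 1 T, (Φ t - Φ (t - 1) + η t / 8) := sum_le_sum step
    _ = Φ T + ∑ t ∈ Icc 1 T, η t / 8 := by
        rw [sum_add_distrib, sum_Icc_sub_pred Φ T.zero_le, hΦ0, sub_zero]
    _ ≤ _ := by linarith [softMin_le (hη_pos T hT) (C T) i]

end ExpWeights

/-- exponential weighting with time-varying rate `η t = 1/√t`:
the expected regret is at most
`(ln|I|)/η_T + (ln|I|) ∑_{t=2}^T (1/η_t - 1/η_{t-1}) + ∑_{t=1}^T η_t/8`,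
which is at most `2 (ln|I|) √T + √T/4 + ln|I|`. -/
theorem stmt_11 {I : Type*} [Fintype I] [Nonempty I] (T : ℕ) (hT : 1 ≤ T)
    (c : ℕ → I → ℝ) (hc : ∀ t i, 0 ≤ c t i ∧ c t i ≤ 1)
    (η : ℕ → ℝ) (hη : ∀ t : ℕ, 1 ≤ t → η t = 1 / Real.sqrt t)
    (C : ℕ → I → ℝ) (hC : ∀ t i, C t i = ∑ s ∈ Finset.Icc 1 t, c s i)
    (p : ℕ → I → ℝ)
    (hp : ∀ t i, p t i =
      Real.exp (-(η t) * C (t - 1) i) / ∑ j, Real.exp (-(η t) * C (t - 1) j)) :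
    ((∑ t ∈ Finset.Icc 1 T, ∑ i, p t i * c t i) -
        Finset.univ.inf' Finset.univ_nonempty (fun i => C T i) ≤
      Real.log (Fintype.card I) / η T +
        Real.log (Fintype.card I) * ∑ t ∈ Finset.Icc 2 T, (1 / η t - 1 / η (t - 1)) +
        ∑ t ∈ Finset.Icc 1 T, η t / 8) ∧
    (Real.log (Fintype.card I) / η T +
        Real.log (Fintype.card I) * ∑ t ∈ Finset.Icc 2 T, (1 / η t - 1 / η (t - 1)) +
        ∑ t ∈ Finset.Icc 1 T, η t / 8 ≤
      2 * Real.log (Fintype.card I) * Real.sqrt T + Real.sqrt T / 4 +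
        Real.log (Fintype.card I)) := by
  obtain rfl : p = fun t => expWeights (η t) (C (t - 1)) := funext₂ hp
  have hη_inv : ∀ t, 1 ≤ t → 1 / η t = √t := fun t ht => by rw [hη t ht, one_div_one_div]
  have hη_pos : ∀ t, 1 ≤ t → 0 < η t := fun t ht => by
    rw [hη t ht]; exact one_div_pos.2 (sqrt_pos.2 (by exact_mod_cast ht))
  have hη_anti : ∀ t, 2 ≤ t → η t ≤ η (t - 1) := fun t ht => by
    rw [← one_div_le_one_div (hη_pos (t - 1) (by omega)) (hη_pos t (by omega)),
      hη_inv t (by omega), hη_inv (t - 1) (by omega)]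
    gcongr
    omega
  obtain ⟨i, -, hi⟩ := exists_mem_eq_inf' univ_nonempty (fun i => C T i)
  have hregret := sum_expWeights_mul_le_add_log_card hT c hc η hη_pos hη_anti C hC i
  have hcorr : ∑ t ∈ Icc 2 T, (1 / η t - 1 / η (t - 1)) = √T - 1 := by
    rw [sum_congr rfl fun t ht => by
      rw [hη_inv t (by grind), hη_inv (t - 1) (by grind)]]
    simpa using sum_Icc_sub_pred (fun t : ℕ => √t) hT
  have hstep_sizes : ∑ t ∈ Icc 1 T, η t / 8 ≤ √T / 4 := by
    rw [← sum_div, sum_congr rfl fun t ht => hη t (mem_Icc.1 ht).1]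
    linarith [sum_Icc_one_div_sqrt_le T]
  have hL : 0 ≤ log (Fintype.card I) := log_nonneg (by exact_mod_cast Fintype.card_pos)
  have hT_sqrt : 1 ≤ √T := one_le_sqrt.2 (by exact_mod_cast hT)
  have hT_div : log (Fintype.card I) / η T = log (Fintype.card I) * √T := by
    rw [div_eq_mul_one_div, hη_inv T hT]
  have hcorr_nonneg := mul_nonneg hL (sub_nonneg.2 hT_sqrt)
  rw [hcorr, hT_div, hi]
  exact ⟨by linarith, by linarith⟩
end
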